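/- arXiv:1805.06583 — 2 statements merged into one kernel-verified Lean document; each statement's English description precedes it below -/
import Mathlib

section
/- Let S be a random variable with cumulative distribution function F_S(s) = C(M-1,N-1)·s^{M-N} for s ∈ [0,δ] and F_S(s) = 1 for s ∈ (δ,1], where δ = C(M-1,N-1)^{-1/(M-N)} and M > N ≥ 1 are integers. Let G be the maximum of 1 - S over Q independent copies of S, i.e., G has cdf F_G(g) = (1 - C(M-1,N-1)(1-g)^{M-N})^Q on [1-δ, 1]. Then E[G] = 1 - Q · C(M-1,N-1)^{-1/(M-N)} · B(Q, (M-N+1)/(M-N)). -/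
/-!
Since `G = 1 - min_i S_i`, the layer-cake formula and independence give
`E[min_i S_i] = ∫_0^∞ P(S > t)^Q dt = ∫_0^δ (1 - K t^m)^Q dt` with `K = C(M-1,N-1)`, `m = M - N`
and `K δ^m = 1`. Rescaling `t = δ u` and expanding binomially turns this into
`δ/m · ∑_k C(Q,k) (-1)^k / (1/m + k)`, and this alternating sum equals `B(1/m, Q+1)`: both sides
satisfy Pascal's recurrence, the Beta side through `B(x,y) = B(x+1,y) + B(x,y+1)`.
Finally `B(1/m, Q+1)/m = Q·B(Q, 1 + 1/m)` by `Γ(z+1) = zΓ(z)`.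
-/

open MeasureTheory ProbabilityTheory

noncomputable def realBeta (x y : ℝ) : ℝ := Real.Gamma x * Real.Gamma y / Real.Gamma (x + y)

open Finset

theorem realBeta_one_right {x : ℝ} (hx : 0 < x) : realBeta x 1 = 1 / x := by
  have hΓ := (Real.Gamma_pos_of_pos hx).ne'
  rw [realBeta, Real.Gamma_one, Real.Gamma_add_one hx.ne']
  field_simp

theorem realBeta_eq_realBeta_add_one_left_add_realBeta_add_one_right {x y : ℝ}
    (hx : 0 < x) (hy : 0 < y) :
    realBeta x y = realBeta (x + 1) y + realBeta x (y + 1) := by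
  have hΓ := (Real.Gamma_pos_of_pos (add_pos hx hy)).ne'
  have hxy : x + y ≠ 0 := by positivity
  simp only [realBeta]
  rw [show x + 1 + y = x + y + 1 by ring, show x + (y + 1) = x + y + 1 by ring,
    Real.Gamma_add_one hx.ne', Real.Gamma_add_one hy.ne', Real.Gamma_add_one hxy]
  field_simp

theorem mul_realBeta_add_one_right_comm {x y : ℝ} (hx : x ≠ 0) (hy : y ≠ 0) :
    x * realBeta x (y + 1) = y * realBeta y (x + 1) := by
  simp only [realBeta]
  rw [Real.Gamma_add_one hx, Real.Gamma_add_one hy, show y + (x + 1) = x + (y + 1) by ring]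
  ring

theorem sum_range_choose_mul_neg_one_pow_div_eq_realBeta (n : ℕ) {x : ℝ} (hx : 0 < x) :
    ∑ k ∈ range (n + 1), (n.choose k : ℝ) * ((-1) ^ k / (x + k)) = realBeta x (n + 1) := by
  induction n generalizing x with
  | zero => simp [realBeta_one_right hx]
  | succ n ih =>
    have hshift : ∑ k ∈ range (n + 1), (n.choose k : ℝ) * ((-1) ^ (k + 1) / (x + (k + 1 : ℕ)))
        = -∑ k ∈ range (n + 1), (n.choose k : ℝ) * ((-1) ^ k / ((x + 1) + k)) := by
      rw [← sum_neg_distrib]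
      refine sum_congr rfl fun k _ => ?_
      push_cast
      ring
    rw [sum_choose_succ_mul (fun k _ => (-1 : ℝ) ^ k / (x + k)) n, hshift, ih hx,
      ih (by positivity), realBeta_eq_realBeta_add_one_left_add_realBeta_add_one_right hx
        (by positivity : (0 : ℝ) < n + 1)]
    push_cast
    ring

theorem integral_one_sub_pow_pow_eq_realBeta {m : ℕ} (hm : m ≠ 0) (n : ℕ) :
    ∫ u in (0 : ℝ)..1, (1 - u ^ m) ^ n = realBeta (1 / m) (n + 1) / m := by
  have hexpand : ∀ u : ℝ, (1 - u ^ m) ^ n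
      = ∑ k ∈ range (n + 1), (n.choose k : ℝ) * (-1) ^ k * u ^ (m * k) := by
    intro u
    rw [sub_eq_add_neg, add_comm, add_pow]
    refine sum_congr rfl fun k _ => ?_
    rw [neg_pow, pow_mul]
    ring
  simp_rw [hexpand]
  rw [intervalIntegral.integral_finsetSum
      fun k _ => (by fun_prop : Continuous _).intervalIntegrable _ _,
    ← sum_range_choose_mul_neg_one_pow_div_eq_realBeta n (by positivity : (0 : ℝ) < 1 / m),
    sum_div]
  refine sum_congr rfl fun k _ => ?_
  rw [intervalIntegral.integral_const_mul, integral_pow, one_pow, zero_pow (Nat.succ_ne_zero _),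
    sub_zero]
  push_cast
  field_simp
  ring

theorem integral_one_sub_mul_pow_pow_eq_realBeta {K δ : ℝ} {m : ℕ} (hm : m ≠ 0) (hδ : δ ≠ 0)
    (hKδ : K * δ ^ m = 1) (n : ℕ) :
    ∫ t in (0 : ℝ)..δ, (1 - K * t ^ m) ^ n = δ * realBeta (1 / m) (n + 1) / m := by
  have hscale : ∀ t : ℝ, K * t ^ m = (t / δ) ^ m := fun t => by
    rw [div_pow, eq_div_iff (pow_ne_zero m hδ), mul_right_comm, hKδ, one_mul]
  simp_rw [hscale]
  rw [intervalIntegral.integral_comp_div (fun u => (1 - u ^ m) ^ n) hδ, zero_div, div_self hδ,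
    integral_one_sub_pow_pow_eq_realBeta hm, smul_eq_mul, mul_div_assoc]

theorem ciSup_sub_eq_sub_ciInf {ι : Type*} [Nonempty ι] [Finite ι] (c : ℝ) (f : ι → ℝ) :
    ⨆ i, (c - f i) = c - ⨅ i, f i :=
  (Antitone.map_ciInf_of_continuousAt (f := (c - ·)) (continuous_sub_left c).continuousAt
    (fun _ _ h => sub_le_sub_left h c) (Finite.bddBelow_range f)).symm

theorem lt_ciInf_iff_of_finite {α ι : Type*} [ConditionallyCompleteLinearOrder α] [Nonempty ι]
    [Finite ι] {f : ι → α} {a : α} : a < ⨅ i, f i ↔ ∀ i, a < f i := by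
  refine ⟨fun h i => h.trans_le (ciInf_le (Finite.bddBelow_range f) i), fun h => ?_⟩
  obtain ⟨j, hj⟩ := exists_eq_ciInf_of_finite (f := f)
  exact hj ▸ h j

theorem ProbabilityTheory.iIndepFun.measure_lt_ciInf {Ω ι : Type*} [MeasurableSpace Ω]
    {μ : Measure Ω} [Fintype ι] [Nonempty ι] {X : ι → Ω → ℝ} (hX : iIndepFun X μ) (t : ℝ) :
    μ {ω | t < ⨅ i, X i ω} = ∏ i, μ {ω | t < X i ω} := by
  simp_rw [lt_ciInf_iff_of_finite, Set.ofPred_forall]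
  exact hX.meas_iInter fun i => ⟨Set.Ioi t, measurableSet_Ioi, rfl⟩

theorem toReal_measure_lt_eq_indicator {Ω : Type*} [MeasurableSpace Ω] {μ : Measure Ω}
    [IsProbabilityMeasure μ] {X : Ω → ℝ} (hX : Measurable X) (hX1 : ∀ ω, X ω ≤ 1)
    {F : ℝ → ℝ} {δ : ℝ} (hF₁ : ∀ s ∈ Set.Icc 0 δ, (μ {ω | X ω ≤ s}).toReal = F s)
    (hF₂ : ∀ s ∈ Set.Ioc δ 1, (μ {ω | X ω ≤ s}).toReal = 1) {t : ℝ} (ht : 0 < t) :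
    (μ {ω | t < X ω}).toReal = (Set.Ioc 0 δ).indicator (fun s => 1 - F s) t := by
  have hcompl : (μ {ω | t < X ω}).toReal = 1 - (μ {ω | X ω ≤ t}).toReal := by
    simpa only [Set.compl_ofPred, not_le, measureReal_def] using
      probReal_compl_eq_one_sub (μ := μ) (measurableSet_le hX measurable_const)
  rw [hcompl]
  by_cases htδ : t ≤ δ
  · rw [Set.indicator_of_mem (show t ∈ Set.Ioc 0 δ from ⟨ht, htδ⟩), hF₁ t ⟨ht.le, htδ⟩]
  · rw [Set.indicator_of_notMem fun h => htδ h.2, sub_eq_zero, eq_comm]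
    by_cases ht1 : t ≤ 1
    · exact hF₂ t ⟨not_le.mp htδ, ht1⟩
    · have huniv : {ω | X ω ≤ t} = Set.univ :=
        Set.eq_univ_of_forall fun ω => (hX1 ω).trans (not_le.mp ht1).le
      simp [huniv]

theorem integral_ciSup_one_sub {Ω ι : Type*} [MeasurableSpace Ω] {μ : Measure Ω}
    [IsProbabilityMeasure μ] [Fintype ι] [Nonempty ι] {X : ι → Ω → ℝ}
    (hX : ∀ i, Measurable (X i)) (hindep : iIndepFun X μ) (hX01 : ∀ i ω, X i ω ∈ Set.Icc 0 1)
    {g : ℝ → ℝ} (htail : ∀ i, ∀ t > 0, (μ {ω | t < X i ω}).toReal = g t) :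
    ∫ ω, ⨆ i, (1 - X i ω) ∂μ = 1 - ∫ t in Set.Ioi 0, g t ^ Fintype.card ι := by
  set T : Ω → ℝ := fun ω => ⨅ i, X i ω
  have hT01 : ∀ ω, T ω ∈ Set.Icc 0 1 := fun ω =>
    ⟨le_ciInf fun i => (hX01 i ω).1,
      (ciInf_le (Finite.bddBelow_range _) (Classical.arbitrary ι)).trans (hX01 _ ω).2⟩
  have hTint : Integrable T μ := by
    refine .of_bound (Measurable.iInf hX).aestronglyMeasurable 1 (ae_of_all _ fun ω => ?_)
    rw [Real.norm_eq_abs, abs_le]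
    exact ⟨by linarith [(hT01 ω).1], (hT01 ω).2⟩
  simp_rw [ciSup_sub_eq_sub_ciInf]
  rw [integral_sub (integrable_const 1) hTint, integral_const, probReal_univ, one_smul,
    hTint.integral_eq_integral_meas_lt (ae_of_all _ fun ω => (hT01 ω).1)]
  congr 1
  refine setIntegral_congr_fun measurableSet_Ioi fun t ht => ?_
  rw [measureReal_def, hindep.measure_lt_ciInf, ENNReal.toReal_prod]
  simp_rw [htail _ t ht, prod_const, card_univ]

theorem setIntegral_Ioi_indicator_Ioc_pow {f : ℝ → ℝ} {δ : ℝ} (hδ : 0 ≤ δ) {n : ℕ}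
    (hn : n ≠ 0) :
    ∫ t in Set.Ioi 0, (Set.Ioc 0 δ).indicator f t ^ n = ∫ t in (0 : ℝ)..δ, f t ^ n := by
  have hpow : ∀ t, (Set.Ioc 0 δ).indicator f t ^ n = (Set.Ioc 0 δ).indicator (f · ^ n) t :=
    fun t => by by_cases ht : t ∈ Set.Ioc 0 δ <;> simp [ht, hn]
  simp_rw [hpow]
  rw [integral_indicator measurableSet_Ioc, Measure.restrict_restrict measurableSet_Ioc,
    Set.inter_eq_self_of_subset_left Set.Ioc_subset_Ioi_self,
    intervalIntegral.integral_of_le hδ]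

theorem stmt2_general {Ω : Type*} [MeasurableSpace Ω] (μ : Measure Ω) [IsProbabilityMeasure μ]
    (M N Q : ℕ) (hMN : N < M) (hQ : 1 ≤ Q)
    (δ : ℝ) (hδ : δ = ((M - 1).choose (N - 1) : ℝ) ^ (-(1 : ℝ) / ((M : ℝ) - N)))
    (S : Fin Q → Ω → ℝ) (hmeas : ∀ i, Measurable (S i))
    (hindep : iIndepFun S μ)
    (h01 : ∀ i, ∀ ω : Ω, S i ω ∈ Set.Icc (0 : ℝ) 1)
    (hcdf₁ : ∀ i, ∀ s ∈ Set.Icc (0 : ℝ) δ,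
      (μ {ω : Ω | S i ω ≤ s}).toReal = ((M - 1).choose (N - 1) : ℝ) * s ^ (M - N))
    (hcdf₂ : ∀ i, ∀ s ∈ Set.Ioc δ (1 : ℝ), (μ {ω : Ω | S i ω ≤ s}).toReal = 1) :
    ∫ ω, (⨆ i, (1 - S i ω)) ∂μ
      = 1 - (Q : ℝ) * ((M - 1).choose (N - 1) : ℝ) ^ (-(1 : ℝ) / ((M : ℝ) - N)) *
          realBeta (Q : ℝ) (((M : ℝ) - N + 1) / ((M : ℝ) - N)) := by
  have : Nonempty (Fin Q) := Fin.pos_iff_nonempty.mp hQ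
  set K : ℝ := ((M - 1).choose (N - 1) : ℝ)
  set m : ℕ := M - N
  have hm : (M : ℝ) - N = m := by rw [Nat.cast_sub hMN.le]
  have hm0 : m ≠ 0 := by omega
  have hK : 0 < K := Nat.cast_pos.mpr (Nat.choose_pos (by omega))
  have hδpos : 0 < δ := hδ ▸ Real.rpow_pos_of_pos hK _
  have hKδ : K * δ ^ m = 1 := by
    rw [hδ, hm, ← Real.rpow_natCast, ← Real.rpow_mul hK.le, div_mul_cancel₀ _ (by positivity),
      Real.rpow_neg_one, mul_inv_cancel₀ hK.ne']
  have htail (i) (t) (ht : t > 0) :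
      (μ {ω | t < S i ω}).toReal = (Set.Ioc 0 δ).indicator (fun s => 1 - K * s ^ m) t :=
    toReal_measure_lt_eq_indicator (hmeas i) (fun ω => (h01 i ω).2) (hcdf₁ i) (hcdf₂ i) ht
  have hbeta : (Q : ℝ) * realBeta Q (1 / m + 1) = 1 / m * realBeta (1 / m) (Q + 1) :=
    mul_realBeta_add_one_right_comm (by positivity) (by positivity)
  rw [integral_ciSup_one_sub hmeas hindep h01 htail, Fintype.card_fin,
    setIntegral_Ioi_indicator_Ioc_pow hδpos.le (by omega),
    integral_one_sub_mul_pow_pow_eq_realBeta hm0 hδpos.ne' hKδ, ← hδ, hm,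
    show ((m : ℝ) + 1) / m = 1 / m + 1 by field_simp; ring, mul_right_comm, hbeta]
  ring

/-- Proposition 1: expectation of the largest normalized beamforming gain
`G = max_{i < Q} (1 - S_i)` for `Q` i.i.d. quantization errors `S_i` with the
quantization-error cdf of QBC. -/
theorem stmt2 {Ω : Type*} [MeasurableSpace Ω] (μ : Measure Ω) [IsProbabilityMeasure μ]
    (M N Q : ℕ) (hN : 1 ≤ N) (hMN : N < M) (hQ : 1 ≤ Q)
    (δ : ℝ) (hδ : δ = ((M - 1).choose (N - 1) : ℝ) ^ (-(1 : ℝ) / ((M : ℝ) - N)))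
    (S : Fin Q → Ω → ℝ) (hmeas : ∀ i, Measurable (S i))
    (hindep : iIndepFun S μ)
    (h01 : ∀ i, ∀ ω : Ω, S i ω ∈ Set.Icc (0 : ℝ) 1)
    (hcdf₁ : ∀ i, ∀ s ∈ Set.Icc (0 : ℝ) δ,
      (μ {ω : Ω | S i ω ≤ s}).toReal = ((M - 1).choose (N - 1) : ℝ) * s ^ (M - N))
    (hcdf₂ : ∀ i, ∀ s ∈ Set.Ioc δ (1 : ℝ), (μ {ω : Ω | S i ω ≤ s}).toReal = 1) :
    ∫ ω, (⨆ i, (1 - S i ω)) ∂μ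
      = 1 - (Q : ℝ) * ((M - 1).choose (N - 1) : ℝ) ^ (-(1 : ℝ) / ((M : ℝ) - N)) *
          realBeta (Q : ℝ) (((M : ℝ) - N + 1) / ((M : ℝ) - N)) :=
  stmt2_general μ M N Q hMN hQ δ hδ S hmeas hindep h01 hcdf₁ hcdf₂
end

section
/- For M > N ≥ 1 and Q ≥ 1, the quantity ω(Q) = Q · C(M-1,N-1)^{-1/(M-N)} · B(Q, (M-N+1)/(M-N)) is strictly decreasing in Q and tends to 0 as Q → ∞. -/
open Filter Real

/-- `ω(Q) = Q · C(M-1,N-1)^{-1/(M-N)} · B(Q, (M-N+1)/(M-N))`. -/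
noncomputable def omegaQ (M N Q : ℕ) : ℝ :=
  (Q : ℝ) * ((M - 1).choose (N - 1) : ℝ) ^ (-(1 : ℝ) / ((M : ℝ) - N)) *
    realBeta (Q : ℝ) (((M : ℝ) - N + 1) / ((M : ℝ) - N))

/-!
Since `x B(x,s) = Γ(x+1)Γ(s)/Γ(x+s)`, the recursion `Γ(t+1) = tΓ(t)` gives
`(x+1) B(x+1,s) = x B(x,s) · (x+1)/(x+s)`, and the factor is `< 1` exactly when `s > 1`; here
`s = (M-N+1)/(M-N) > 1`. For the limit, Euler's formula `Γ(s) = lim n^s n!/(s(s+1)⋯(s+n))`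
shows that `n B(n,s)` behaves like `Γ(s) n^{1-s} → 0`.
-/

namespace Real

theorem Gamma_add_nat_eq_mul_prod {s : ℝ} (hs : ∀ j : ℕ, s + j ≠ 0) (n : ℕ) :
    Gamma (s + n) = Gamma s * ∏ j ∈ Finset.range n, (s + j) := by
  induction n with
  | zero => simp
  | succ n ih =>
    rw [Nat.cast_succ, ← add_assoc, Gamma_add_one (hs n), ih, Finset.prod_range_succ]
    ring

end Real

theorem self_mul_realBeta {x : ℝ} (hx : x ≠ 0) (s : ℝ) :
    x * realBeta x s = Gamma (x + 1) * Gamma s / Gamma (x + s) := by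
  rw [realBeta, Gamma_add_one hx]
  ring

theorem realBeta_pos {x s : ℝ} (hx : 0 < x) (hs : 0 < s) : 0 < realBeta x s := by
  unfold realBeta
  have := Gamma_pos_of_pos hx
  have := Gamma_pos_of_pos hs
  have := Gamma_pos_of_pos (add_pos hx hs)
  positivity

theorem add_one_mul_realBeta_add_one {x s : ℝ} (hx : 0 < x) (hs : 0 < s) :
    (x + 1) * realBeta (x + 1) s = x * realBeta x s * ((x + 1) / (x + s)) := by
  have hxs : x + s ≠ 0 := (add_pos hx hs).ne'
  have hΓ : Gamma (x + s) ≠ 0 := (Gamma_pos_of_pos (add_pos hx hs)).ne'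
  rw [self_mul_realBeta (by linarith), self_mul_realBeta hx.ne', add_right_comm x 1 s,
    Gamma_add_one hxs, Gamma_add_one (by linarith)]
  field_simp

theorem add_one_mul_realBeta_add_one_lt {x s : ℝ} (hx : 0 < x) (hs : 1 < s) :
    (x + 1) * realBeta (x + 1) s < x * realBeta x s := by
  have hpos : 0 < x * realBeta x s := mul_pos hx (realBeta_pos hx (by linarith))
  rw [add_one_mul_realBeta_add_one hx (by linarith)]
  refine mul_lt_of_lt_one_right hpos ?_
  rw [div_lt_one (by linarith)]
  linarith

theorem strictAnti_succ_mul_realBeta {s : ℝ} (hs : 1 < s) :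
    StrictAnti fun n : ℕ => ((n + 1 : ℕ) : ℝ) * realBeta (n + 1 : ℕ) s :=
  strictAnti_nat_of_succ_lt fun n => by
    push_cast
    exact add_one_mul_realBeta_add_one_lt (by positivity) hs

theorem natCast_mul_realBeta_eq_GammaSeq {s : ℝ} (hs : 0 < s) {n : ℕ} (hn : n ≠ 0) :
    n * realBeta n s = GammaSeq s n * ((s + n) * (n : ℝ) ^ (-s)) := by
  have hn0 : (0 : ℝ) < n := by positivity
  have hΓ : Gamma s ≠ 0 := (Gamma_pos_of_pos hs).ne'
  have hprod : ∏ j ∈ Finset.range (n + 1), (s + j) = (s + n) * Gamma (s + n) / Gamma s := by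
    have h := Gamma_add_nat_eq_mul_prod (s := s) (fun j => by positivity) (n + 1)
    rw [Nat.cast_succ, ← add_assoc, Gamma_add_one (by positivity)] at h
    rw [h]
    field_simp
  have hΓn : Gamma (s + n) ≠ 0 := (Gamma_pos_of_pos (by positivity)).ne'
  have hns : (n : ℝ) ^ s ≠ 0 := (rpow_pos_of_pos hn0 s).ne'
  rw [self_mul_realBeta hn0.ne', Gamma_nat_eq_factorial, GammaSeq, hprod, add_comm (n : ℝ) s,
    rpow_neg hn0.le]
  field_simp

theorem tendsto_add_mul_rpow_neg {s : ℝ} (hs : 1 < s) :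
    Tendsto (fun n : ℕ => (s + n) * (n : ℝ) ^ (-s)) atTop (nhds 0) := by
  have hrpow {t : ℝ} (ht : 0 < t) : Tendsto (fun n : ℕ => (n : ℝ) ^ (-t)) atTop (nhds 0) :=
    (tendsto_rpow_neg_atTop ht).comp tendsto_natCast_atTop_atTop
  have hsum := ((hrpow (by linarith : 0 < s)).const_mul s).add (hrpow (by linarith : 0 < s - 1))
  rw [mul_zero, add_zero] at hsum
  refine hsum.congr' ?_
  filter_upwards [eventually_ge_atTop 1] with n hn
  have hn0 : (0 : ℝ) < n := by exact_mod_cast hn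
  rw [neg_sub, rpow_sub hn0, rpow_one, rpow_neg hn0.le]
  ring

theorem tendsto_natCast_mul_realBeta {s : ℝ} (hs : 1 < s) :
    Tendsto (fun n : ℕ => n * realBeta n s) atTop (nhds 0) := by
  have h := (GammaSeq_tendsto_Gamma s).mul (tendsto_add_mul_rpow_neg hs)
  rw [mul_zero] at h
  refine h.congr' ?_
  filter_upwards [eventually_ne_atTop 0] with n hn
  exact (natCast_mul_realBeta_eq_GammaSeq (by linarith) hn).symm

theorem stmt6_general (M N : ℕ) (hMN : N < M) :
    (∀ q₁ q₂ : ℕ, 1 ≤ q₁ → q₁ < q₂ → omegaQ M N q₂ < omegaQ M N q₁) ∧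
      Tendsto (fun Q : ℕ => omegaQ M N Q) atTop (nhds 0) := by
  have hd : (0 : ℝ) < (M : ℝ) - N := sub_pos.mpr (by exact_mod_cast hMN)
  have hs : 1 < ((M : ℝ) - N + 1) / ((M : ℝ) - N) := by
    rw [one_lt_div hd]
    linarith
  set c : ℝ := ((M - 1).choose (N - 1) : ℝ) ^ (-(1 : ℝ) / ((M : ℝ) - N))
  have hc : 0 < c := rpow_pos_of_pos (by exact_mod_cast Nat.choose_pos (by omega)) _
  have homega (Q : ℕ) :
      omegaQ M N Q = c * (Q * realBeta Q (((M : ℝ) - N + 1) / ((M : ℝ) - N))) := by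
    rw [omegaQ]
    ring
  refine ⟨fun q₁ q₂ h₁ h₁₂ => ?_, ?_⟩
  · obtain ⟨k, rfl⟩ := Nat.exists_eq_add_of_le' h₁
    obtain ⟨m, rfl⟩ := Nat.exists_eq_add_of_le' (h₁.trans h₁₂.le)
    rw [homega, homega]
    exact mul_lt_mul_of_pos_left (strictAnti_succ_mul_realBeta hs (by omega)) hc
  · simpa only [homega, mul_zero] using (tendsto_natCast_mul_realBeta hs).const_mul c

theorem stmt6 (M N : ℕ) (hN : 1 ≤ N) (hMN : N < M) :
    (∀ q₁ q₂ : ℕ, 1 ≤ q₁ → q₁ < q₂ → omegaQ M N q₂ < omegaQ M N q₁) ∧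
      Tendsto (fun Q : ℕ => omegaQ M N Q) atTop (nhds 0) :=
  stmt6_general M N hMN
end
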